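/- (Optimal bandwidths minimize the asymptotic weighted MISE.) Let n be a positive integer and let K, M, N > 0 and L ∈ ℝ satisfy L² < M·N. Define A(h1, h2) = K/(n h1 h2^3) + M h1^4 + N h2^4 + 2L h1² h2² for h1, h2 > 0, and set δ = sqrt( (sqrt(L² + 3MN) + L)/N ). Then δ > 0, L + Nδ² > 0, and A attains its unique global minimum over (0,∞)² at the point h1* = [ 3K / (4 n δ^5 (L + N δ²)) ]^(1/8), h2* = δ · h1*. -/

import Mathlib

open Real

/-!
Writing `h₂ = t h₁`, the AMISE becomes `(K / (n t³)) / h₁⁴ + biasCoeff t · h₁⁴`. For fixed `t`,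
AM-GM in `x = h₁⁴` gives the minimum `2 √(K / n · biasCoeff t / t³)`, attained only at
`x = √((K / (n t³)) / biasCoeff t)`. The ratio profile `biasCoeff t / t³` has derivative
`(N t⁴ - 2 L t² - 3 M) / t⁴`, so it is strictly minimised at the unique positive root `δ` of the
numerator, which is the `δ` of the statement; at `t = δ` the AM-GM minimiser is `h₁*⁴`.
-/

theorem div_add_mul_eq_two_mul_sqrt_mul_add_sq {a b x : ℝ} (ha : 0 ≤ a) (hb : 0 ≤ b) (hx : x ≠ 0) :
    a / x + b * x = 2 * √(a * b) + (√a - √b * x) ^ 2 / x := by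
  rw [Real.sqrt_mul ha]
  field_simp
  linear_combination (-1 : ℝ) * Real.sq_sqrt ha - x ^ 2 * Real.sq_sqrt hb

theorem two_mul_sqrt_mul_le_div_add_mul {a b x : ℝ} (ha : 0 ≤ a) (hb : 0 ≤ b) (hx : 0 < x) :
    2 * √(a * b) ≤ a / x + b * x := by
  rw [div_add_mul_eq_two_mul_sqrt_mul_add_sq ha hb hx.ne']
  have : 0 ≤ (√a - √b * x) ^ 2 / x := by positivity
  linarith

theorem two_mul_sqrt_mul_lt_div_add_mul {a b x : ℝ} (ha : 0 ≤ a) (hb : 0 < b) (hx : 0 < x)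
    (hne : x ≠ √(a / b)) : 2 * √(a * b) < a / x + b * x := by
  rw [div_add_mul_eq_two_mul_sqrt_mul_add_sq ha hb.le hx.ne']
  have hsb : 0 < √b := Real.sqrt_pos.mpr hb
  have hgap : √a - √b * x ≠ 0 := by
    refine fun h => hne ?_
    rw [Real.sqrt_div' a hb.le, eq_div_iff hsb.ne']
    linarith
  have : 0 < (√a - √b * x) ^ 2 / x := by positivity
  linarith

theorem div_sqrt_div_add_mul_sqrt_div {a b : ℝ} (ha : 0 ≤ a) (hb : 0 < b) :
    a / √(a / b) + b * √(a / b) = 2 * √(a * b) := by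
  rcases ha.eq_or_lt with rfl | ha
  · simp
  rw [div_add_mul_eq_two_mul_sqrt_mul_add_sq ha.le hb.le (Real.sqrt_pos.mpr (by positivity)).ne',
    ← Real.sqrt_mul hb.le, mul_div_cancel₀ a hb.ne']
  simp

theorem rpow_one_div_eight_pow_four {B : ℝ} (hB : 0 ≤ B) : (B ^ ((1 : ℝ) / 8)) ^ 4 = √B := by
  rw [Real.sqrt_eq_rpow, ← Real.rpow_natCast, ← Real.rpow_mul hB]
  norm_num

def biasCoeff (M N L t : ℝ) : ℝ := M + N * t ^ 4 + 2 * L * t ^ 2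

section

variable {M N L δ t : ℝ}

theorem biasCoeff_pos (hN : 0 < N) (hL : L ^ 2 < M * N) (t : ℝ) :
    0 < biasCoeff M N L t := by
  unfold biasCoeff
  nlinarith [sq_nonneg (N * t ^ 2 + L)]

theorem biasCoeff_div_pow_three_lt (hM : 0 < M) (hN : 0 < N) (hδ : 0 < δ)
    (hcrit : N * δ ^ 4 = 2 * L * δ ^ 2 + 3 * M) (ht : 0 < t) (hne : t ≠ δ) :
    biasCoeff M N L δ / δ ^ 3 < biasCoeff M N L t / t ^ 3 := by
  have hgap : 0 < N * δ ^ 2 - 2 * L := by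
    have h3M : δ ^ 2 * (N * δ ^ 2 - 2 * L) = 3 * M := by linear_combination hcrit
    exact pos_of_mul_pos_right (h3M ▸ mul_pos three_pos hM) (by positivity)
  have hE : 0 < 3 * N * δ * t ^ 2 + 2 * (N * δ ^ 2 - 2 * L) * t + δ * (N * δ ^ 2 - 2 * L) := by
    positivity
  have hsq : 0 < (t - δ) ^ 2 := by
    have := sub_ne_zero_of_ne hne
    positivity
  rw [div_lt_div_iff₀ (by positivity) (by positivity)]
  unfold biasCoeff
  have key : δ ^ 3 * (M + N * t ^ 4 + 2 * L * t ^ 2) - t ^ 3 * (M + N * δ ^ 4 + 2 * L * δ ^ 2) =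
      δ ^ 2 / 3 * (t - δ) ^ 2 *
        (3 * N * δ * t ^ 2 + 2 * (N * δ ^ 2 - 2 * L) * t + δ * (N * δ ^ 2 - 2 * L)) := by
    linear_combination (t ^ 3 - δ ^ 3) / 3 * hcrit
  linarith [mul_pos (mul_pos (by positivity : (0 : ℝ) < δ ^ 2 / 3) hsq) hE]

theorem amise_eq_div_add_biasCoeff_mul (K n h : ℝ) :
    K / (n * h * (t * h) ^ 3) + M * h ^ 4 + N * (t * h) ^ 4 + 2 * L * h ^ 2 * (t * h) ^ 2 =
      K / n / t ^ 3 / h ^ 4 + biasCoeff M N L t * h ^ 4 := by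
  unfold biasCoeff
  ring

theorem bandwidth_ratio_spec (hN : 0 < N) (hL : L ^ 2 < M * N)
    (hδ : δ = √((√(L ^ 2 + 3 * M * N) + L) / N)) :
    0 < δ ∧ 0 < L + N * δ ^ 2 ∧ N * δ ^ 4 = 2 * L * δ ^ 2 + 3 * M := by
  set s := √(L ^ 2 + 3 * M * N)
  have hMN : 0 < M * N := lt_of_le_of_lt (sq_nonneg L) hL
  have hs2 : s ^ 2 = L ^ 2 + 3 * M * N := Real.sq_sqrt (by nlinarith)
  have hsL : |2 * L| < s := by
    rw [← Real.sqrt_sq_eq_abs]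
    exact Real.sqrt_lt_sqrt (sq_nonneg _) (by linarith)
  have hL2 := neg_abs_le (2 * L)
  have hu : 0 < (s + L) / N := div_pos (by linarith [abs_nonneg (2 * L)]) hN
  have hδ2 : N * δ ^ 2 = s + L := by
    rw [hδ, Real.sq_sqrt hu.le]
    field_simp
  refine ⟨hδ ▸ Real.sqrt_pos.mpr hu, by linarith, ?_⟩
  have : N * (N * δ ^ 4) = N * (2 * L * δ ^ 2 + 3 * M) := by
    linear_combination (N * δ ^ 2 + s - L) * hδ2 + hs2
  exact mul_left_cancel₀ hN.ne' this

theorem biasCoeff_eq_of_crit (hcrit : N * δ ^ 4 = 2 * L * δ ^ 2 + 3 * M) :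
    biasCoeff M N L δ = 4 * δ ^ 2 * (L + N * δ ^ 2) / 3 := by
  unfold biasCoeff
  linear_combination (-1 / 3 : ℝ) * hcrit

end

/-- Optimal bandwidths minimize the asymptotic weighted MISE:
for `K, M, N > 0`, `L² < M·N`, and `A(h1,h2) = K/(n h1 h2³) + M h1⁴ + N h2⁴ + 2 L h1² h2²`,
with `δ = sqrt((sqrt(L² + 3MN) + L)/N)`, we have `δ > 0`, `L + Nδ² > 0`, and `A` attains its
unique global minimum on `(0,∞)²` at `h1* = (3K/(4 n δ⁵ (L + Nδ²)))^(1/8)`, `h2* = δ h1*`. -/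
theorem optimal_bandwidth_minimizes_AMISE
    (n : ℕ) (hn : 0 < n) (K M N L : ℝ)
    (hK : 0 < K) (hM : 0 < M) (hN : 0 < N) (hL : L ^ 2 < M * N)
    (A : ℝ → ℝ → ℝ)
    (hA : ∀ h1 h2 : ℝ, A h1 h2 =
      K / (n * h1 * h2 ^ 3) + M * h1 ^ 4 + N * h2 ^ 4 + 2 * L * h1 ^ 2 * h2 ^ 2)
    (δ : ℝ) (hδ : δ = Real.sqrt ((Real.sqrt (L ^ 2 + 3 * M * N) + L) / N))
    (h1s h2s : ℝ)
    (hh1s : h1s = (3 * K / (4 * n * δ ^ 5 * (L + N * δ ^ 2))) ^ ((1 : ℝ) / 8))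
    (hh2s : h2s = δ * h1s) :
    0 < δ ∧ 0 < L + N * δ ^ 2 ∧
      ∀ h1 h2 : ℝ, 0 < h1 → 0 < h2 → (h1, h2) ≠ (h1s, h2s) → A h1s h2s < A h1 h2 := by
  obtain ⟨hδ0, hLN, hcrit⟩ := bandwidth_ratio_spec hN hL hδ
  refine ⟨hδ0, hLN, fun h1 h2 hh1 hh2 hne => ?_⟩
  have hn' : (0 : ℝ) < n := by exact_mod_cast hn
  have hb := biasCoeff_pos hN hL
  have hA_ray (h t : ℝ) : A h (t * h) = K / n / t ^ 3 / h ^ 4 + biasCoeff M N L t * h ^ 4 := by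
    rw [hA]
    exact amise_eq_div_add_biasCoeff_mul K n h
  have hh1s4 : h1s ^ 4 = √(K / n / δ ^ 3 / biasCoeff M N L δ) := by
    rw [hh1s, rpow_one_div_eight_pow_four (by positivity), biasCoeff_eq_of_crit hcrit]
    congr 1
    field_simp
  have hAopt : A h1s h2s = 2 * √(K / n / δ ^ 3 * biasCoeff M N L δ) := by
    rw [hh2s, hA_ray, hh1s4]
    exact div_sqrt_div_add_mul_sqrt_div (by positivity) (hb δ)
  obtain ⟨t, ht, rfl⟩ : ∃ t, 0 < t ∧ h2 = t * h1 := ⟨h2 / h1, div_pos hh2 hh1, by field_simp⟩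
  rw [hAopt, hA_ray]
  rcases eq_or_ne t δ with rfl | htδ
  · have h1s0 : 0 < h1s := by rw [hh1s]; positivity
    have hne4 : h1 ^ 4 ≠ h1s ^ 4 := fun h => hne <| by
      rw [(pow_left_inj₀ hh1.le h1s0.le four_ne_zero).mp h, hh2s]
    exact two_mul_sqrt_mul_lt_div_add_mul (by positivity) (hb t) (by positivity) (hh1s4 ▸ hne4)
  · calc 2 * √(K / n / δ ^ 3 * biasCoeff M N L δ)
        = 2 * √(K / n * (biasCoeff M N L δ / δ ^ 3)) := by ring_nf
      _ < 2 * √(K / n * (biasCoeff M N L t / t ^ 3)) := by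
        have hbδ := hb δ
        gcongr 2 * √(K / n * ?_)
        exact biasCoeff_div_pow_three_lt hM hN hδ0 hcrit ht htδ
      _ = 2 * √(K / n / t ^ 3 * biasCoeff M N L t) := by ring_nf
      _ ≤ _ := two_mul_sqrt_mul_le_div_add_mul (by positivity) (hb t).le (by positivity)
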